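/- arXiv:2010.15234 — 7 statements merged into one kernel-verified Lean document; each statement's English description precedes it below -/
import Mathlib

section
/- Consider the unconstrained two-environment linear regression game U-LRG on ℝⁿ. If the least squares optimal solutions of the two environments coincide, i.e. w₁* = w₂* =: w*, then a pair (w₁†, w₂†) ∈ ℝⁿ × ℝⁿ is a pure Nash equilibrium of U-LRG if and only if w₁† + w₂† = w*. -/
/-!
Writing `ρ = S w*`, the risk of an environment is the quadratic form of `S` centred at `w*`,
shifted by a constant: `R(w₁, w₂) = (w₁ + w₂ - w*)ᵀ S (w₁ + w₂ - w*) - w*ᵀ S w*`.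
It is minimal, with value `-w*ᵀ S w*`, exactly when `w₁ + w₂ = w*`, whatever the split.
So if both players' optima equal `w*`, a pair with sum `w*` leaves no one a profitable
deviation, while from any other pair player 1 gains strictly by switching to `w* - w₂`.
-/

open Matrix

/-- Risk of an environment with second-moment matrix `S` and cross-moment vector `ρ`
at the joint action `(w₁, w₂)`:  `(w₁+w₂)ᵀ S (w₁+w₂) − 2 ρᵀ (w₁+w₂)`. -/
noncomputable def risk {n : ℕ} (S : Matrix (Fin n) (Fin n) ℝ) (ρ : Fin n → ℝ)
    (w₁ w₂ : Fin n → ℝ) : ℝ :=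
  (w₁ + w₂) ⬝ᵥ (S *ᵥ (w₁ + w₂)) - 2 * (ρ ⬝ᵥ (w₁ + w₂))

namespace Matrix

variable {ι : Type*} [Fintype ι] {S : Matrix ι ι ℝ}

lemma IsHermitian.dotProduct_mulVec_comm (hS : S.IsHermitian) (a b : ι → ℝ) :
    a ⬝ᵥ (S *ᵥ b) = b ⬝ᵥ (S *ᵥ a) := by
  rw [dotProduct_mulVec, ← mulVec_transpose, ← conjTranspose_eq_transpose_of_trivial, hS.eq,
    dotProduct_comm]

lemma eq_mulVec_of_inv_mulVec_eq {α : Type*} [CommRing α] [DecidableEq ι] {A : Matrix ι ι α}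
    (hA : IsUnit A.det) {b c : ι → α} (h : A⁻¹ *ᵥ b = c) : b = A *ᵥ c := by
  rw [← h, mulVec_mulVec, mul_nonsing_inv _ hA, one_mulVec]

end Matrix

section risk

variable {n : ℕ} {S : Matrix (Fin n) (Fin n) ℝ} {c w₁ w₂ : Fin n → ℝ}

lemma risk_mulVec (hS : S.IsHermitian) :
    risk S (S *ᵥ c) w₁ w₂ =
      (w₁ + w₂ - c) ⬝ᵥ (S *ᵥ (w₁ + w₂ - c)) - c ⬝ᵥ (S *ᵥ c) := by
  have hcomm := hS.dotProduct_mulVec_comm c (w₁ + w₂)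
  rw [risk, dotProduct_comm (S *ᵥ c)]
  simp only [mulVec_sub, dotProduct_sub, sub_dotProduct]
  linarith

lemma risk_mulVec_of_add_eq (hS : S.IsHermitian) (h : w₁ + w₂ = c) :
    risk S (S *ᵥ c) w₁ w₂ = -(c ⬝ᵥ (S *ᵥ c)) := by
  simp [risk_mulVec hS, h]

lemma neg_le_risk_mulVec (hS : S.PosSemidef) :
    -(c ⬝ᵥ (S *ᵥ c)) ≤ risk S (S *ᵥ c) w₁ w₂ := by
  have := hS.dotProduct_mulVec_nonneg (w₁ + w₂ - c)
  rw [star_trivial] at this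
  rw [risk_mulVec hS.isHermitian]
  linarith

lemma add_eq_of_risk_mulVec_le (hS : S.PosDef)
    (h : risk S (S *ᵥ c) w₁ w₂ ≤ -(c ⬝ᵥ (S *ᵥ c))) :
    w₁ + w₂ = c := by
  by_contra hne
  have := hS.dotProduct_mulVec_pos (sub_ne_zero.mpr hne)
  rw [star_trivial] at this
  rw [risk_mulVec hS.isHermitian] at h
  linarith

end risk

/-- In the unconstrained two-environment linear regression game U-LRG,
if the least squares optimal solutions coincide (`w₁* = w₂* = w*`), then `(w₁†, w₂†)` is a
pure Nash equilibrium iff `w₁† + w₂† = w*`. -/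
theorem ulrg_nash_iff_sum_eq_of_ls_eq {n : ℕ}
    (S₁ S₂ : Matrix (Fin n) (Fin n) ℝ) (hS₁ : S₁.PosDef) (hS₂ : S₂.PosDef)
    (ρ₁ ρ₂ : Fin n → ℝ) (wstar : Fin n → ℝ)
    (h₁ : S₁⁻¹ *ᵥ ρ₁ = wstar) (h₂ : S₂⁻¹ *ᵥ ρ₂ = wstar)
    (w₁ w₂ : Fin n → ℝ) :
    ((∀ u : Fin n → ℝ, risk S₁ ρ₁ w₁ w₂ ≤ risk S₁ ρ₁ u w₂) ∧
     (∀ v : Fin n → ℝ, risk S₂ ρ₂ w₁ w₂ ≤ risk S₂ ρ₂ w₁ v)) ↔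
    w₁ + w₂ = wstar := by
  obtain rfl := eq_mulVec_of_inv_mulVec_eq (isUnit_iff_isUnit_det _ |>.mp hS₁.isUnit) h₁
  obtain rfl := eq_mulVec_of_inv_mulVec_eq (isUnit_iff_isUnit_det _ |>.mp hS₂.isUnit) h₂
  constructor
  · rintro ⟨hbest₁, -⟩
    refine add_eq_of_risk_mulVec_le hS₁ ((hbest₁ (wstar - w₂)).trans_eq ?_)
    exact risk_mulVec_of_add_eq hS₁.isHermitian (sub_add_cancel wstar w₂)
  · intro hsum
    refine ⟨fun u => ?_, fun v => ?_⟩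
    · rw [risk_mulVec_of_add_eq hS₁.isHermitian hsum]
      exact neg_le_risk_mulVec hS₁.posSemidef
    · rw [risk_mulVec_of_add_eq hS₂.isHermitian hsum]
      exact neg_le_risk_mulVec hS₂.posSemidef
end

section
/- In the constrained two-environment linear regression game C-LRG with bound W > 0, suppose the least squares optimal solutions satisfy w₁*, w₂* ∈ 𝒲 and w₁* ≠ w₂*. Then at every pure Nash equilibrium (w₁†, w₂†) of C-LRG, at least one of the two predictors lies on the boundary of the ℓ∞ ball: ‖w₁†‖∞ = W or ‖w₂†‖∞ = W. -/
/-!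
If neither predictor of an equilibrium is on the boundary of the `ℓ∞` ball, each one is an
interior minimiser of its own (convex quadratic) risk, so each first-order condition holds:
`Σₑ (w₁ + w₂) = ρₑ` for `e = 1, 2`. Hence both least squares solutions equal `w₁ + w₂`.
-/

open Matrix

theorem isLocalMin_of_forall_norm_le {E β : Type*} [SeminormedAddCommGroup E] [Preorder β]
    {f : E → β} {w : E} {W : ℝ} (hw : ‖w‖ < W) (hmin : ∀ u, ‖u‖ ≤ W → f w ≤ f u) :
    IsLocalMin f w :=
  IsMinOn.isLocalMin (s := Metric.closedBall 0 W) (fun u hu => hmin u (by simpa using hu))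
    (Metric.closedBall_mem_nhds_of_mem (by simpa using hw))

section

variable {n : ℕ} {S : Matrix (Fin n) (Fin n) ℝ} {ρ : Fin n → ℝ}

theorem risk_comm (w₁ w₂ : Fin n → ℝ) : risk S ρ w₁ w₂ = risk S ρ w₂ w₁ := by
  simp only [risk, add_comm w₁]

theorem risk_add_smul (hS : S.IsSymm) (w v d : Fin n → ℝ) (t : ℝ) :
    risk S ρ (w + t • d) v =
      risk S ρ w v + 2 * t * (d ⬝ᵥ (S *ᵥ (w + v) - ρ)) + t ^ 2 * (d ⬝ᵥ (S *ᵥ d)) := by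
  have hsymm : (w + v) ⬝ᵥ (S *ᵥ d) = d ⬝ᵥ (S *ᵥ (w + v)) := by
    rw [dotProduct_mulVec, ← mulVec_transpose, hS.eq, dotProduct_comm]
  have hsplit : w + t • d + v = (w + v) + t • d := by abel
  simp only [risk, hsplit, mulVec_add, mulVec_smul, dotProduct_add, add_dotProduct,
    dotProduct_smul, smul_dotProduct, smul_eq_mul, dotProduct_sub, hsymm, dotProduct_comm ρ d]
  ring

theorem hasDerivAt_risk_add_smul (hS : S.IsSymm) (w v d : Fin n → ℝ) :
    HasDerivAt (fun t : ℝ => risk S ρ (w + t • d) v) (2 * (d ⬝ᵥ (S *ᵥ (w + v) - ρ))) 0 := by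
  rw [funext (risk_add_smul (ρ := ρ) hS w v d)]
  have h := (((hasDerivAt_id (0 : ℝ)).const_mul (2 * (d ⬝ᵥ (S *ᵥ (w + v) - ρ)))).const_add
    (risk S ρ w v)).add ((hasDerivAt_pow 2 (0 : ℝ)).mul_const (d ⬝ᵥ (S *ᵥ d)))
  refine (h.congr_of_eventuallyEq (.of_forall fun t => ?_)).congr_deriv (by norm_num)
  simp only [Pi.add_apply, id]
  ring

theorem mulVec_eq_of_isLocalMin_risk (hS : S.IsSymm) {w v : Fin n → ℝ}
    (hmin : IsLocalMin (fun u => risk S ρ u v) w) : S *ᵥ (w + v) = ρ := by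
  set d := S *ᵥ (w + v) - ρ
  have hline : IsLocalMin (fun t : ℝ => risk S ρ (w + t • d) v) 0 := by
    refine IsLocalMin.comp_continuous (f := fun u => risk S ρ u v) ?_ (by fun_prop)
    simpa only [zero_smul, add_zero] using hmin
  have hd : 2 * (d ⬝ᵥ d) = 0 := hline.hasDerivAt_eq_zero (hasDerivAt_risk_add_smul hS w v d)
  exact sub_eq_zero.mp (dotProduct_self_eq_zero.mp (by linarith))

end

theorem clrg_nash_boundary_general {n : ℕ}
    (S₁ S₂ : Matrix (Fin n) (Fin n) ℝ) (hS₁ : S₁.PosDef) (hS₂ : S₂.PosDef)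
    (ρ₁ ρ₂ : Fin n → ℝ) (W : ℝ)
    (hne : S₁⁻¹ *ᵥ ρ₁ ≠ S₂⁻¹ *ᵥ ρ₂)
    (w₁ w₂ : Fin n → ℝ) (hw₁ : ‖w₁‖ ≤ W) (hw₂ : ‖w₂‖ ≤ W)
    (hN₁ : ∀ u : Fin n → ℝ, ‖u‖ ≤ W → risk S₁ ρ₁ w₁ w₂ ≤ risk S₁ ρ₁ u w₂)
    (hN₂ : ∀ v : Fin n → ℝ, ‖v‖ ≤ W → risk S₂ ρ₂ w₁ w₂ ≤ risk S₂ ρ₂ w₁ v) :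
    ‖w₁‖ = W ∨ ‖w₂‖ = W := by
  by_contra! hint
  have e₁ : S₁ *ᵥ (w₁ + w₂) = ρ₁ :=
    mulVec_eq_of_isLocalMin_risk (isHermitian_iff_isSymm.mp hS₁.isHermitian)
      (isLocalMin_of_forall_norm_le (hw₁.lt_of_ne hint.1) hN₁)
  have e₂ : S₂ *ᵥ (w₂ + w₁) = ρ₂ :=
    mulVec_eq_of_isLocalMin_risk (isHermitian_iff_isSymm.mp hS₂.isHermitian)
      (isLocalMin_of_forall_norm_le (hw₂.lt_of_ne hint.2)
        (by simpa only [risk_comm w₁] using hN₂))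
  have := hS₁.isUnit.invertible
  have := hS₂.isUnit.invertible
  rw [inv_mulVec_eq_vec e₁.symm, inv_mulVec_eq_vec e₂.symm, add_comm] at hne
  exact hne rfl

/-- In the constrained game C-LRG with bound `W > 0`, if the least
squares optimal solutions `w₁* = Σ₁⁻¹ρ₁` and `w₂* = Σ₂⁻¹ρ₂` lie in the ball `𝒲`
and differ, then at every pure Nash equilibrium `(w₁†, w₂†)` at least one predictor
is on the boundary of the `ℓ∞` ball: `‖w₁†‖∞ = W` or `‖w₂†‖∞ = W`. -/
theorem clrg_nash_boundary {n : ℕ}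
    (S₁ S₂ : Matrix (Fin n) (Fin n) ℝ) (hS₁ : S₁.PosDef) (hS₂ : S₂.PosDef)
    (ρ₁ ρ₂ : Fin n → ℝ) (W : ℝ) (hW : 0 < W)
    (hls₁ : ‖S₁⁻¹ *ᵥ ρ₁‖ ≤ W) (hls₂ : ‖S₂⁻¹ *ᵥ ρ₂‖ ≤ W)
    (hne : S₁⁻¹ *ᵥ ρ₁ ≠ S₂⁻¹ *ᵥ ρ₂)
    (w₁ w₂ : Fin n → ℝ) (hw₁ : ‖w₁‖ ≤ W) (hw₂ : ‖w₂‖ ≤ W)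
    (hN₁ : ∀ u : Fin n → ℝ, ‖u‖ ≤ W → risk S₁ ρ₁ w₁ w₂ ≤ risk S₁ ρ₁ u w₂)
    (hN₂ : ∀ v : Fin n → ℝ, ‖v‖ ≤ W → risk S₂ ρ₂ w₁ w₂ ≤ risk S₂ ρ₂ w₁ v) :
    ‖w₁‖ = W ∨ ‖w₂‖ = W :=
  clrg_nash_boundary_general S₁ S₂ hS₁ hS₂ ρ₁ ρ₂ W hne w₁ w₂ hw₁ hw₂ hN₁ hN₂
end

section
/- In the confounder-only linear structural equation model, assume additionally that E[X¹ (X¹)ᵀ] = Σ₁ is positive definite, E[ζ ζᵀ] = diag(σ_ζ²) with every entry of σ_ζ² ∈ ℝ^q strictly positive, and E[X¹] = 0. Then the population least squares problem min over w ∈ ℝ^{p+q} of E[(Y − wᵀ X)²], where X = (X¹, X²), has the unique minimizer w* = (γ, (Θ Θᵀ + diag(σ_ζ²))⁻¹ Θ η). -/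
open MeasureTheory ProbabilityTheory Matrix

/-!
Work in `L²(μ)`, where `⟪f, g⟫ = E[f g]`. Independence and centring make the classes of `X¹`, `H`,
`ζ`, `ε` mutually orthogonal, with `H` orthonormal and `ζ` orthogonal of squared norms `σ_ζ²`. The
objective becomes `‖y - ∑ wᵢ xᵢ‖²`, which is minimised where the residual is orthogonal to every
feature, uniquely when the features are linearly independent. For `w* = (γ, v)` the residual is
`ηᵀH + ε - vᵀX²`: it is orthogonal to `X¹`, and its inner product with `X²` is
`Θη - (ΘΘᵀ + diag σ_ζ²) v = 0`. The features are linearly independent because `X¹ ⟂ X²`, the Gram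
matrix of `X¹` is `Σ₁ ≻ 0` and that of `X²` is `ΘΘᵀ + diag σ_ζ² ≻ 0`.
-/

section L2

variable {Ω : Type*} [MeasurableSpace Ω] {μ : Measure Ω}

theorem inner_toLp_toLp {f g : Ω → ℝ} (hf : MemLp f 2 μ) (hg : MemLp g 2 μ) :
    inner ℝ (hf.toLp f) (hg.toLp g) = ∫ ω, f ω * g ω ∂μ := by
  rw [L2.inner_def]
  refine integral_congr_ae ?_
  filter_upwards [hf.coeFn_toLp, hg.coeFn_toLp] with ω hfω hgω
  simp [hfω, hgω, mul_comm]

theorem gram_toLp {ι : Type*} {X : Ω → ι → ℝ} (hX : ∀ i, MemLp (fun ω => X ω i) 2 μ) :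
    gram ℝ (fun i => (hX i).toLp _) = of fun i i' => ∫ ω, X ω i * X ω i' ∂μ := by
  ext i i'
  exact inner_toLp_toLp _ _

theorem integral_sq_eq_norm_toLp_sq {f : Ω → ℝ} (hf : MemLp f 2 μ) :
    ∫ ω, f ω ^ 2 ∂μ = ‖hf.toLp f‖ ^ 2 := by
  rw [← real_inner_self_eq_norm_sq, inner_toLp_toLp]
  simp only [sq]

theorem inner_toLp_eq_zero_of_indepFun {f g : Ω → ℝ} (hfg : IndepFun f g μ)
    (hf : MemLp f 2 μ) (hg : MemLp g 2 μ) (hg₀ : ∫ ω, g ω ∂μ = 0) :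
    inner ℝ (hf.toLp f) (hg.toLp g) = 0 := by
  rw [inner_toLp_toLp, hfg.integral_fun_mul_eq_mul_integral hf.1 hg.1, hg₀, mul_zero]

theorem toLp_sum_mul {ι : Type*} {p : ENNReal} {f : ι → Ω → ℝ} (hf : ∀ i, MemLp (f i) p μ)
    (c : ι → ℝ) (s : Finset ι) (h : MemLp (fun ω => ∑ i ∈ s, c i * f i ω) p μ) :
    h.toLp _ = ∑ i ∈ s, c i • (hf i).toLp (f i) := by
  induction s using Finset.cons_induction with
  | empty => exact MemLp.toLp_zero _
  | cons a s ha ih =>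
    rw [Finset.sum_cons, ← ih (memLp_finsetSum _ fun i _ => (hf i).const_mul (c i)),
      ← MemLp.toLp_const_smul, ← MemLp.toLp_add]
    simp only [Finset.sum_cons]
    rfl

theorem memLp_of_eq_sum_mul_add {ι : Type*} [Fintype ι] {p : ENNReal} {f : ι → Ω → ℝ}
    {F g : Ω → ℝ} {c : ι → ℝ} (hf : ∀ i, MemLp (f i) p μ) (hg : MemLp g p μ)
    (hF : ∀ ω, F ω = ∑ i, c i * f i ω + g ω) : MemLp F p μ := by
  rw [funext hF]
  exact (memLp_finsetSum _ fun i _ => (hf i).const_mul (c i)).add hg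

theorem toLp_of_eq_sum_mul_add {ι : Type*} [Fintype ι] {p : ENNReal} {f : ι → Ω → ℝ}
    {F g : Ω → ℝ} {c : ι → ℝ} (hf : ∀ i, MemLp (f i) p μ) (hg : MemLp g p μ)
    (hF : ∀ ω, F ω = ∑ i, c i * f i ω + g ω) :
    (memLp_of_eq_sum_mul_add hf hg hF).toLp F = ∑ i, c i • (hf i).toLp (f i) + hg.toLp g := by
  rw [← toLp_sum_mul hf c _ (memLp_finsetSum _ fun i _ => (hf i).const_mul (c i)),
    ← MemLp.toLp_add]
  exact MemLp.toLp_congr _ _ (ae_of_all _ hF)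

theorem integral_sq_sub_sum_mul {ι : Type*} [Fintype ι] {Y : Ω → ℝ} {F : Ω → ι → ℝ}
    (hY : MemLp Y 2 μ) (hF : ∀ i, MemLp (fun ω => F ω i) 2 μ) (w : ι → ℝ) :
    ∫ ω, (Y ω - ∑ i, w i * F ω i) ^ 2 ∂μ
      = ‖hY.toLp Y - ∑ i, w i • (hF i).toLp (fun ω => F ω i)‖ ^ 2 := by
  have hS := memLp_finsetSum Finset.univ fun i _ => (hF i).const_mul (w i)
  rw [integral_sq_eq_norm_toLp_sq (f := fun ω => Y ω - ∑ i, w i * F ω i) (hY.sub hS),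
    ← toLp_sum_mul hF w _ hS, ← MemLp.toLp_sub]
  rfl

theorem memLp_append {p q : ℕ} {X₁ : Ω → Fin p → ℝ} {X₂ : Ω → Fin q → ℝ}
    (hX₁ : ∀ i, MemLp (fun ω => X₁ ω i) 2 μ) (hX₂ : ∀ k, MemLp (fun ω => X₂ ω k) 2 μ)
    (i : Fin (p + q)) :
    MemLp (fun ω => Fin.append (X₁ ω) (X₂ ω) i) 2 μ :=
  Fin.addCases (fun i => by simpa using hX₁ i) (fun k => by simpa using hX₂ k) i

theorem toLp_append {p q : ℕ} {X₁ : Ω → Fin p → ℝ} {X₂ : Ω → Fin q → ℝ}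
    (hX₁ : ∀ i, MemLp (fun ω => X₁ ω i) 2 μ) (hX₂ : ∀ k, MemLp (fun ω => X₂ ω k) 2 μ)
    (i : Fin (p + q)) :
    (memLp_append hX₁ hX₂ i).toLp _
      = Fin.append (fun i => (hX₁ i).toLp _) (fun k => (hX₂ k).toLp _) i :=
  Fin.addCases (fun i => by simp only [Fin.append_left])
    (fun k => by simp only [Fin.append_right]) i

theorem integral_sq_sub_sum_mul_append {p q : ℕ} {Y : Ω → ℝ} {X₁ : Ω → Fin p → ℝ}
    {X₂ : Ω → Fin q → ℝ} (hY : MemLp Y 2 μ) (hX₁ : ∀ i, MemLp (fun ω => X₁ ω i) 2 μ)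
    (hX₂ : ∀ k, MemLp (fun ω => X₂ ω k) 2 μ) (w : Fin (p + q) → ℝ) :
    ∫ ω, (Y ω - ∑ i, w i * Fin.append (X₁ ω) (X₂ ω) i) ^ 2 ∂μ
      = ‖hY.toLp Y - ∑ i, w i •
          Fin.append (fun i => (hX₁ i).toLp _) (fun k => (hX₂ k).toLp _) i‖ ^ 2 := by
  rw [integral_sq_sub_sum_mul hY (memLp_append hX₁ hX₂)]
  congr 3
  exact Finset.sum_congr rfl fun i _ => congrArg (w i • ·) (toLp_append hX₁ hX₂ i)

end L2

section LeastSquares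

variable {E : Type*} [NormedAddCommGroup E] [InnerProductSpace ℝ E] {ι : Type*} [Fintype ι]
  {x : ι → E} {y : E} {v : ι → ℝ}

theorem norm_sub_sum_smul_sq_eq_add (horth : ∀ i, inner ℝ (x i) (y - ∑ j, v j • x j) = 0)
    (w : ι → ℝ) :
    ‖y - ∑ i, w i • x i‖ ^ 2 = ‖y - ∑ i, v i • x i‖ ^ 2 + ‖∑ i, (w i - v i) • x i‖ ^ 2 := by
  have hsplit : y - ∑ i, w i • x i = (y - ∑ i, v i • x i) - ∑ i, (w i - v i) • x i := by
    simp only [sub_smul, Finset.sum_sub_distrib]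
    abel
  have hperp : inner ℝ (y - ∑ i, v i • x i) (∑ i, (w i - v i) • x i) = 0 := by
    rw [inner_sum]
    refine Finset.sum_eq_zero fun i _ => ?_
    rw [real_inner_smul_right, real_inner_comm, horth, mul_zero]
  rw [hsplit, norm_sub_sq_real, hperp]
  ring

theorem unique_minimizer_norm_sub_sum_smul_sq (hx : LinearIndependent ℝ x)
    (horth : ∀ i, inner ℝ (x i) (y - ∑ j, v j • x j) = 0) :
    (∀ w : ι → ℝ, ‖y - ∑ i, v i • x i‖ ^ 2 ≤ ‖y - ∑ i, w i • x i‖ ^ 2) ∧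
      ∀ w : ι → ℝ, (∀ u : ι → ℝ, ‖y - ∑ i, w i • x i‖ ^ 2 ≤ ‖y - ∑ i, u i • x i‖ ^ 2) → w = v := by
  refine ⟨fun w => ?_, fun w hw => ?_⟩
  · rw [norm_sub_sum_smul_sq_eq_add horth w]
    exact le_add_of_nonneg_right (sq_nonneg _)
  · have hle := hw v
    rw [norm_sub_sum_smul_sq_eq_add horth w] at hle
    have hzero : ∑ i, (w i - v i) • x i = 0 := by
      rw [← norm_eq_zero]
      nlinarith [norm_nonneg (∑ i, (w i - v i) • x i)]
    funext i
    exact sub_eq_zero.1 (Fintype.linearIndependent_iff.1 hx _ hzero i)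

end LeastSquares

theorem Matrix.posDef_mul_transpose_add_diagonal {m n : Type*} [Fintype m] [Fintype n]
    [DecidableEq m] (Θ : Matrix m n ℝ) {σ : m → ℝ} (hσ : ∀ k, 0 < σ k) :
    (Θ * Θᵀ + diagonal σ).PosDef := by
  refine PosDef.posSemidef_add ?_ (PosDef.diagonal hσ)
  simpa using posSemidef_self_mul_conjTranspose Θ

section LinearSEM

variable {E : Type*} [NormedAddCommGroup E] [InnerProductSpace ℝ E] {κ : Type*} [Fintype κ]
  {p q : ℕ} {x₁ : Fin p → E} {h : κ → E} {z x₂ : Fin q → E} {e y : E} {Θ : Matrix (Fin q) κ ℝ}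

theorem linearIndependent_append_of_inner_eq_zero (h₁ : LinearIndependent ℝ x₁)
    (h₂ : LinearIndependent ℝ x₂) (h₁₂ : ∀ i k, inner ℝ (x₁ i) (x₂ k) = 0) :
    LinearIndependent ℝ (Fin.append x₁ x₂) := by
  refine (linearIndependent_equiv' finSumFinEquiv Fin.append_comp_sumElim).1
    (h₁.sum_type h₂ (Submodule.IsOrtho.disjoint (Submodule.isOrtho_span.2 ?_)))
  rintro _ ⟨i, rfl⟩ _ ⟨k, rfl⟩
  exact h₁₂ i k

theorem inner_confounded_confounder (hh : Orthonormal ℝ h) (hhz : ∀ j k, inner ℝ (h j) (z k) = 0)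
    (hx₂ : ∀ k, x₂ k = ∑ j, Θ k j • h j + z k) (k : Fin q) (j : κ) :
    inner ℝ (x₂ k) (h j) = Θ k j := by
  rw [hx₂, inner_add_left, hh.inner_left_fintype, real_inner_comm, hhz, add_zero]
  rfl

theorem gram_confounded (hh : Orthonormal ℝ h) (hhz : ∀ j k, inner ℝ (h j) (z k) = 0)
    {σ : Fin q → ℝ} (hz : gram ℝ z = diagonal σ) (hx₂ : ∀ k, x₂ k = ∑ j, Θ k j • h j + z k) :
    gram ℝ x₂ = Θ * Θᵀ + diagonal σ := by
  have hzx₂ : ∀ k l, inner ℝ (z k) (x₂ l) = diagonal σ k l := fun k l => by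
    simp [hx₂ l, ← hz, inner_add_right, inner_sum, real_inner_smul_right, real_inner_comm (h _), hhz]
  ext k l
  simp only [gram_apply, hx₂ k, inner_add_left, sum_inner, real_inner_smul_left, hzx₂,
    Matrix.add_apply, Matrix.mul_apply, transpose_apply]
  congr 1
  refine Finset.sum_congr rfl fun j _ => ?_
  rw [real_inner_comm, inner_confounded_confounder hh hhz hx₂]

theorem inner_confounded_eq_zero {u : E} (huh : ∀ j, inner ℝ u (h j) = 0)
    (huz : ∀ k, inner ℝ u (z k) = 0) (hx₂ : ∀ k, x₂ k = ∑ j, Θ k j • h j + z k) (k : Fin q) :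
    inner ℝ u (x₂ k) = 0 := by
  simp [hx₂ k, inner_add_right, inner_sum, real_inner_smul_right, huh, huz]

theorem inner_append_sub_sum_smul_eq_zero (hh : Orthonormal ℝ h)
    (hhz : ∀ j k, inner ℝ (h j) (z k) = 0) {σ : Fin q → ℝ} (hz : gram ℝ z = diagonal σ)
    (hx₁h : ∀ i j, inner ℝ (x₁ i) (h j) = 0) (hx₁z : ∀ i k, inner ℝ (x₁ i) (z k) = 0)
    (hx₁e : ∀ i, inner ℝ (x₁ i) e = 0) (hhe : ∀ j, inner ℝ (h j) e = 0)
    (hze : ∀ k, inner ℝ (z k) e = 0) (hx₂ : ∀ k, x₂ k = ∑ j, Θ k j • h j + z k)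
    {γ : Fin p → ℝ} {η : κ → ℝ} (hy : y = ∑ i, γ i • x₁ i + ∑ j, η j • h j + e)
    {v : Fin q → ℝ} (hv : (Θ * Θᵀ + diagonal σ) *ᵥ v = Θ *ᵥ η) (i : Fin (p + q)) :
    inner ℝ (Fin.append x₁ x₂ i) (y - ∑ j, Fin.append γ v j • Fin.append x₁ x₂ j) = 0 := by
  have hres : y - ∑ j, Fin.append γ v j • Fin.append x₁ x₂ j
      = ∑ j, η j • h j + e - ∑ k, v k • x₂ k := by
    rw [hy, Fin.sum_univ_add]
    simp only [Fin.append_left, Fin.append_right]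
    abel
  rw [hres]
  refine Fin.addCases (fun i => ?_) (fun k => ?_) i
  · simp [inner_sub_right, inner_add_right, inner_sum, real_inner_smul_right, hx₁h, hx₁e,
      inner_confounded_eq_zero (hx₁h _) (hx₁z _) hx₂]
  · have hΘη := congrFun hv k
    rw [← gram_confounded hh hhz hz hx₂] at hΘη
    simp only [mulVec, dotProduct, gram_apply] at hΘη
    simp only [Fin.append_right, inner_sub_right, inner_add_right, inner_sum,
      real_inner_smul_right, inner_confounded_confounder hh hhz hx₂,
      real_inner_comm e,
      inner_confounded_eq_zero (fun j => (real_inner_comm _ _).trans (hhe j))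
        (fun k => (real_inner_comm _ _).trans (hze k)) hx₂, add_zero]
    simp only [mul_comm (η _), mul_comm (v _), hΘη, sub_self]

theorem unique_minimizer_linearSEM (hx₁ : LinearIndependent ℝ x₁) (hh : Orthonormal ℝ h)
    (hhz : ∀ j k, inner ℝ (h j) (z k) = 0) {σ : Fin q → ℝ} (hσ : ∀ k, 0 < σ k)
    (hz : gram ℝ z = diagonal σ) (hx₁h : ∀ i j, inner ℝ (x₁ i) (h j) = 0)
    (hx₁z : ∀ i k, inner ℝ (x₁ i) (z k) = 0) (hx₁e : ∀ i, inner ℝ (x₁ i) e = 0)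
    (hhe : ∀ j, inner ℝ (h j) e = 0) (hze : ∀ k, inner ℝ (z k) e = 0)
    (hx₂ : ∀ k, x₂ k = ∑ j, Θ k j • h j + z k) {γ : Fin p → ℝ} {η : κ → ℝ}
    (hy : y = ∑ i, γ i • x₁ i + ∑ j, η j • h j + e) :
    (∀ w : Fin (p + q) → ℝ,
        ‖y - ∑ i, Fin.append γ ((Θ * Θᵀ + diagonal σ)⁻¹ *ᵥ (Θ *ᵥ η)) i • Fin.append x₁ x₂ i‖ ^ 2
          ≤ ‖y - ∑ i, w i • Fin.append x₁ x₂ i‖ ^ 2) ∧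
      ∀ w : Fin (p + q) → ℝ,
        (∀ u : Fin (p + q) → ℝ, ‖y - ∑ i, w i • Fin.append x₁ x₂ i‖ ^ 2
          ≤ ‖y - ∑ i, u i • Fin.append x₁ x₂ i‖ ^ 2) →
        w = Fin.append γ ((Θ * Θᵀ + diagonal σ)⁻¹ *ᵥ (Θ *ᵥ η)) := by
  have hA := Θ.posDef_mul_transpose_add_diagonal hσ
  have hx₂ind : LinearIndependent ℝ x₂ :=
    linearIndependent_of_posDef_gram (by rwa [gram_confounded hh hhz hz hx₂])
  have hv : (Θ * Θᵀ + diagonal σ) *ᵥ ((Θ * Θᵀ + diagonal σ)⁻¹ *ᵥ (Θ *ᵥ η)) = Θ *ᵥ η := by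
    rw [mulVec_mulVec, mul_nonsing_inv _ ((isUnit_iff_isUnit_det _).1 hA.isUnit), one_mulVec]
  exact unique_minimizer_norm_sub_sum_smul_sq
    (linearIndependent_append_of_inner_eq_zero hx₁ hx₂ind
      fun i => inner_confounded_eq_zero (hx₁h i) (hx₁z i) hx₂)
    (inner_append_sub_sum_smul_eq_zero hh hhz hz hx₁h hx₁z hx₁e hhe hze hx₂ hy hv)

end LinearSEM

theorem sem_least_squares_solution_general {Ω : Type*} [MeasurableSpace Ω]
    (μ : Measure Ω) [IsProbabilityMeasure μ] {p s q : ℕ}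
    (X₁ : Ω → Fin p → ℝ) (H : Ω → Fin s → ℝ) (Z : Ω → Fin q → ℝ) (ε : Ω → ℝ)
    (hX₁2 : ∀ i, MemLp (fun ω => X₁ ω i) 2 μ)
    (hH2 : ∀ j, MemLp (fun ω => H ω j) 2 μ)
    (hZ2 : ∀ k, MemLp (fun ω => Z ω k) 2 μ)
    (hε2 : MemLp ε 2 μ)
    (hX₁H : IndepFun X₁ H μ) (hX₁Z : IndepFun X₁ Z μ) (hX₁ε : IndepFun X₁ ε μ)
    (hHZ : IndepFun H Z μ) (hHε : IndepFun H ε μ) (hZε : IndepFun Z ε μ)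
    (hHmean : ∀ j, ∫ ω, H ω j ∂μ = 0)
    (hZmean : ∀ k, ∫ ω, Z ω k ∂μ = 0)
    (hεmean : ∫ ω, ε ω ∂μ = 0)
    (hHcov : ∀ j j', ∫ ω, H ω j * H ω j' ∂μ = if j = j' then 1 else 0)
    (γ : Fin p → ℝ) (η : Fin s → ℝ) (Θ : Matrix (Fin q) (Fin s) ℝ)
    (Y : Ω → ℝ) (X₂ : Ω → Fin q → ℝ)
    (hY : ∀ ω, Y ω = (∑ i, γ i * X₁ ω i) + (∑ j, η j * H ω j) + ε ω)
    (hX₂ : ∀ ω k, X₂ ω k = (∑ j, Θ k j * H ω j) + Z ω k)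
    -- additional assumptions of Statement 10:
    (hSigma1pd : Matrix.PosDef (Matrix.of fun i i' : Fin p => ∫ ω, X₁ ω i * X₁ ω i' ∂μ))
    (σζsq : Fin q → ℝ) (hσζpos : ∀ k, 0 < σζsq k)
    (hZcov : ∀ k k', ∫ ω, Z ω k * Z ω k' ∂μ = if k = k' then σζsq k else 0) :
    (∀ w : Fin (p + q) → ℝ,
        ∫ ω, (Y ω - ∑ i, Fin.append γ ((Θ * Θᵀ + Matrix.diagonal σζsq)⁻¹ *ᵥ (Θ *ᵥ η)) i
                * Fin.append (X₁ ω) (X₂ ω) i) ^ 2 ∂μ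
      ≤ ∫ ω, (Y ω - ∑ i, w i * Fin.append (X₁ ω) (X₂ ω) i) ^ 2 ∂μ) ∧
    (∀ w : Fin (p + q) → ℝ,
      (∀ u : Fin (p + q) → ℝ,
        ∫ ω, (Y ω - ∑ i, w i * Fin.append (X₁ ω) (X₂ ω) i) ^ 2 ∂μ
          ≤ ∫ ω, (Y ω - ∑ i, u i * Fin.append (X₁ ω) (X₂ ω) i) ^ 2 ∂μ) →
      w = Fin.append γ ((Θ * Θᵀ + Matrix.diagonal σζsq)⁻¹ *ᵥ (Θ *ᵥ η))) := by
  have hX₂2 : ∀ k, MemLp (fun ω => X₂ ω k) 2 μ :=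
    fun k => memLp_of_eq_sum_mul_add hH2 (hZ2 k) (hX₂ · k)
  have hηHε : MemLp (fun ω => ∑ j, η j * H ω j + ε ω) 2 μ :=
    memLp_of_eq_sum_mul_add hH2 hε2 fun _ => rfl
  have hY2 : MemLp Y 2 μ :=
    memLp_of_eq_sum_mul_add hX₁2 hηHε fun ω => (hY ω).trans (add_assoc _ _ _)
  set x₁ := fun i => (hX₁2 i).toLp _
  set h := fun j => (hH2 j).toLp _
  set z := fun k => (hZ2 k).toLp _
  set e := hε2.toLp ε
  have hx₂ : ∀ k, (hX₂2 k).toLp _ = ∑ j, Θ k j • h j + z k :=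
    fun k => toLp_of_eq_sum_mul_add hH2 (hZ2 k) (hX₂ · k)
  have hy : hY2.toLp Y = ∑ i, γ i • x₁ i + ∑ j, η j • h j + e := by
    rw [toLp_of_eq_sum_mul_add hX₁2 hηHε fun ω => (hY ω).trans (add_assoc _ _ _),
      toLp_of_eq_sum_mul_add hH2 hε2 fun _ => rfl, add_assoc]
  have hh : Orthonormal ℝ h := gram_eq_one_iff_orthonormal.1 <| by
    rw [gram_toLp]
    ext j j'
    simp [hHcov, one_apply]
  have hz : gram ℝ z = diagonal σζsq := by
    rw [gram_toLp]
    ext k k'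
    simp [hZcov, diagonal_apply]
  simp only [integral_sq_sub_sum_mul_append hY2 hX₁2 hX₂2]
  exact unique_minimizer_linearSEM
    (linearIndependent_of_posDef_gram ((gram_toLp hX₁2).symm ▸ hSigma1pd)) hh
    (fun j k => inner_toLp_eq_zero_of_indepFun
      (hHZ.comp (measurable_pi_apply j) (measurable_pi_apply k)) _ _ (hZmean k))
    hσζpos hz
    (fun i j => inner_toLp_eq_zero_of_indepFun
      (hX₁H.comp (measurable_pi_apply i) (measurable_pi_apply j)) _ _ (hHmean j))
    (fun i k => inner_toLp_eq_zero_of_indepFun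
      (hX₁Z.comp (measurable_pi_apply i) (measurable_pi_apply k)) _ _ (hZmean k))
    (fun i => inner_toLp_eq_zero_of_indepFun
      (hX₁ε.comp (measurable_pi_apply i) measurable_id) _ _ hεmean)
    (fun j => inner_toLp_eq_zero_of_indepFun
      (hHε.comp (measurable_pi_apply j) measurable_id) _ _ hεmean)
    (fun k => inner_toLp_eq_zero_of_indepFun
      (hZε.comp (measurable_pi_apply k) measurable_id) _ _ hεmean)
    hx₂ hy

/-- **Proposition 2 of the paper.** In the confounder-only linear SEM,
with `E[X¹ (X¹)ᵀ] = Σ₁` positive definite, `E[ζ ζᵀ] = diag(σ_ζ²)` with strictly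
positive entries, and `E[X¹] = 0`, the population least squares problem
`min_w E[(Y − wᵀ X)²]` over `w ∈ ℝ^{p+q}`, where `X = (X¹, X²)`, has the unique
minimizer `w* = (γ, (Θ Θᵀ + diag(σ_ζ²))⁻¹ Θ η)`. -/
theorem sem_least_squares_solution {Ω : Type*} [MeasurableSpace Ω]
    (μ : Measure Ω) [IsProbabilityMeasure μ] {p s q : ℕ}
    (X₁ : Ω → Fin p → ℝ) (H : Ω → Fin s → ℝ) (Z : Ω → Fin q → ℝ) (ε : Ω → ℝ)
    (hX₁m : Measurable X₁) (hHm : Measurable H) (hZm : Measurable Z)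
    (hεm : Measurable ε)
    (hX₁2 : ∀ i, MemLp (fun ω => X₁ ω i) 2 μ)
    (hH2 : ∀ j, MemLp (fun ω => H ω j) 2 μ)
    (hZ2 : ∀ k, MemLp (fun ω => Z ω k) 2 μ)
    (hε2 : MemLp ε 2 μ)
    (hX₁H : IndepFun X₁ H μ) (hX₁Z : IndepFun X₁ Z μ) (hX₁ε : IndepFun X₁ ε μ)
    (hHZ : IndepFun H Z μ) (hHε : IndepFun H ε μ) (hZε : IndepFun Z ε μ)
    (hHmean : ∀ j, ∫ ω, H ω j ∂μ = 0)
    (hZmean : ∀ k, ∫ ω, Z ω k ∂μ = 0)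
    (hεmean : ∫ ω, ε ω ∂μ = 0)
    (hHcov : ∀ j j', ∫ ω, H ω j * H ω j' ∂μ = if j = j' then 1 else 0)
    (γ : Fin p → ℝ) (η : Fin s → ℝ) (Θ : Matrix (Fin q) (Fin s) ℝ)
    (Y : Ω → ℝ) (X₂ : Ω → Fin q → ℝ)
    (hY : ∀ ω, Y ω = (∑ i, γ i * X₁ ω i) + (∑ j, η j * H ω j) + ε ω)
    (hX₂ : ∀ ω k, X₂ ω k = (∑ j, Θ k j * H ω j) + Z ω k)
    -- additional assumptions of Statement 10:
    (hX₁mean : ∀ i, ∫ ω, X₁ ω i ∂μ = 0)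
    (hSigma1pd : Matrix.PosDef (Matrix.of fun i i' : Fin p => ∫ ω, X₁ ω i * X₁ ω i' ∂μ))
    (σζsq : Fin q → ℝ) (hσζpos : ∀ k, 0 < σζsq k)
    (hZcov : ∀ k k', ∫ ω, Z ω k * Z ω k' ∂μ = if k = k' then σζsq k else 0) :
    (∀ w : Fin (p + q) → ℝ,
        ∫ ω, (Y ω - ∑ i, Fin.append γ ((Θ * Θᵀ + Matrix.diagonal σζsq)⁻¹ *ᵥ (Θ *ᵥ η)) i
                * Fin.append (X₁ ω) (X₂ ω) i) ^ 2 ∂μ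
      ≤ ∫ ω, (Y ω - ∑ i, w i * Fin.append (X₁ ω) (X₂ ω) i) ^ 2 ∂μ) ∧
    (∀ w : Fin (p + q) → ℝ,
      (∀ u : Fin (p + q) → ℝ,
        ∫ ω, (Y ω - ∑ i, w i * Fin.append (X₁ ω) (X₂ ω) i) ^ 2 ∂μ
          ≤ ∫ ω, (Y ω - ∑ i, u i * Fin.append (X₁ ω) (X₂ ω) i) ^ 2 ∂μ) →
      w = Fin.append γ ((Θ * Θᵀ + Matrix.diagonal σζsq)⁻¹ *ᵥ (Θ *ᵥ η))) :=
  sem_least_squares_solution_general μ X₁ H Z ε hX₁2 hH2 hZ2 hε2 hX₁H hX₁Z hX₁ε hHZ hHε hZε hHmean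
    hZmean hεmean hHcov γ η Θ Y X₂ hY hX₂ hSigma1pd σζsq hσζpos hZcov
end

section
/- Let n = p + q. For e ∈ {1,2} let Σ_{e1} be a p×p symmetric positive definite matrix, let d_e ∈ ℝ^q have strictly positive entries, let θ_e ∈ ℝ^q, and let γ ∈ ℝ^p. Set Σ_e = blockdiag(Σ_{e1}, diag(d_e)) and ρ_e = (Σ_{e1} γ, θ_e) ∈ ℝⁿ, and define the environment-e population loss R̄_e(w) = wᵀ Σ_e w − 2 ρ_eᵀ w for w ∈ ℝⁿ. Then for every mixture weight π ∈ [0,1], the function w ↦ π R̄₁(w) + (1−π) R̄₂(w) has a unique minimizer over ℝⁿ, equal to (γ, v) where for each k ∈ {1,…,q}, v_k = (π θ_{1,k} + (1−π) θ_{2,k}) / (π d_{1,k} + (1−π) d_{2,k}). (This is the solution learned by empirical risk minimization when the data is pooled across environments with proportions π and 1−π.) -/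
open Matrix

/-!
Write `L_{S,ρ}(w) = wᵀ S w − 2 ρᵀ w`. The pooled loss is `L_{S,ρ}` for the mixtures
`S = π S₁ + (1 − π) S₂` and `ρ = π ρ₁ + (1 − π) ρ₂`; since `ρ_e = (Σ_{e1} γ, θ_e)`, the mixture `ρ`
has the same shape, with `Σ_{e1}` replaced by its mixture. If `S` is positive definite and
`S w₀ = ρ`, then `L_{S,ρ}(w) − L_{S,ρ}(w₀) = (w − w₀)ᵀ S (w − w₀)`, so `w₀` is the unique
minimizer, and for block-diagonal `S` the equation `S w₀ = ρ` is solved by `w₀ = (γ, θ / d)`.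
-/

lemma Matrix.PosDef.fromBlocks_zero {R m n : Type*} [Ring R] [PartialOrder R] [StarRing R]
    [IsOrderedAddMonoid R] [Fintype m] [Fintype n] {A : Matrix m m R} {D : Matrix n n R}
    (hA : A.PosDef) (hD : D.PosDef) : (fromBlocks A 0 0 D).PosDef := by
  refine .of_dotProduct_mulVec_pos (hA.isHermitian.fromBlocks (by simp) hD.isHermitian) ?_
  intro x hx
  obtain ⟨a, b, rfl⟩ : ∃ a b, x = Sum.elim a b := ⟨_, _, (Sum.elim_comp_inl_inr x).symm⟩
  simp only [fromBlocks_mulVec, Sum.elim_comp_inl, Sum.elim_comp_inr, zero_mulVec, add_zero,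
    zero_add, Function.star_sumElim, sumElim_dotProduct_sumElim]
  by_cases ha : a = 0
  · have hb : b ≠ 0 := by rintro rfl; exact hx (by rw [ha, Sum.elim_zero_zero])
    simpa [ha] using hD.dotProduct_mulVec_pos hb
  · exact add_pos_of_pos_of_nonneg (hA.dotProduct_mulVec_pos ha)
      (hD.posSemidef.dotProduct_mulVec_nonneg b)

lemma Matrix.PosDef.smul_add_one_sub_smul {ι : Type*} {A B : Matrix ι ι ℝ} (hA : A.PosDef)
    (hB : B.PosDef) {t : ℝ} (ht₀ : 0 ≤ t) (ht₁ : t ≤ 1) : (t • A + (1 - t) • B).PosDef := by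
  rcases ht₀.eq_or_lt with rfl | ht₀
  · simpa using hB
  · exact (hA.smul ht₀).add_posSemidef (hB.posSemidef.smul (sub_nonneg.mpr ht₁))

section QuadLoss

variable {ι : Type*} [Fintype ι]

def quadLoss (S : Matrix ι ι ℝ) (ρ w : ι → ℝ) : ℝ := w ⬝ᵥ (S *ᵥ w) - 2 * (ρ ⬝ᵥ w)

lemma mul_quadLoss_add_mul_quadLoss (a b : ℝ) (S₁ S₂ : Matrix ι ι ℝ) (ρ₁ ρ₂ w : ι → ℝ) :
    a * quadLoss S₁ ρ₁ w + b * quadLoss S₂ ρ₂ w =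
      quadLoss (a • S₁ + b • S₂) (a • ρ₁ + b • ρ₂) w := by
  simp only [quadLoss, add_mulVec, smul_mulVec, dotProduct_add, dotProduct_smul, add_dotProduct,
    smul_dotProduct, smul_eq_mul]
  ring

lemma quadLoss_sub_quadLoss {S : Matrix ι ι ℝ} (hS : S.IsHermitian) {ρ w₀ : ι → ℝ}
    (h : S *ᵥ w₀ = ρ) (w : ι → ℝ) :
    quadLoss S ρ w - quadLoss S ρ w₀ = (w - w₀) ⬝ᵥ (S *ᵥ (w - w₀)) := by
  have hsymm : w₀ ⬝ᵥ (S *ᵥ w) = w ⬝ᵥ (S *ᵥ w₀) := by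
    rw [dotProduct_mulVec, ← mulVec_transpose, dotProduct_comm,
      ← conjTranspose_eq_transpose_of_trivial, hS]
  simp only [quadLoss, mulVec_sub, dotProduct_sub, sub_dotProduct, hsymm, ← h,
    dotProduct_comm (S *ᵥ w₀)]
  ring

theorem Matrix.PosDef.forall_quadLoss_le_iff {S : Matrix ι ι ℝ} (hS : S.PosDef) {ρ w₀ : ι → ℝ}
    (h : S *ᵥ w₀ = ρ) (w : ι → ℝ) :
    (∀ u, quadLoss S ρ w ≤ quadLoss S ρ u) ↔ w = w₀ := by
  have hgap := quadLoss_sub_quadLoss hS.isHermitian h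
  constructor
  · intro hmin
    by_contra hne
    have hpos := hS.dotProduct_mulVec_pos (sub_ne_zero.mpr hne)
    rw [star_trivial] at hpos
    linarith [hgap w, hmin w₀]
  · rintro rfl u
    have hnonneg := hS.posSemidef.dotProduct_mulVec_nonneg (u - w)
    rw [star_trivial] at hnonneg
    linarith [hgap u]

end QuadLoss

lemma fromBlocks_diagonal_mulVec_sumElim_div {m n : Type*} [Fintype m] [Fintype n]
    [DecidableEq n] (A : Matrix m m ℝ) {d : n → ℝ} (hd : ∀ k, d k ≠ 0) (γ : m → ℝ) (θ : n → ℝ) :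
    fromBlocks A 0 0 (diagonal d) *ᵥ Sum.elim γ (fun k => θ k / d k) = Sum.elim (A *ᵥ γ) θ := by
  simp only [fromBlocks_mulVec, Sum.elim_comp_inl, Sum.elim_comp_inr, zero_mulVec, add_zero,
    zero_add]
  congr 1
  funext k
  rw [mulVec_diagonal, mul_div_cancel₀ _ (hd k)]

theorem forall_quadLoss_fromBlocks_diagonal_le_iff {m n : Type*} [Fintype m] [Fintype n]
    [DecidableEq n] {A : Matrix m m ℝ} (hA : A.PosDef) {d : n → ℝ} (hd : ∀ k, 0 < d k)
    (γ : m → ℝ) (θ : n → ℝ) (w : m ⊕ n → ℝ) :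
    (∀ u, quadLoss (fromBlocks A 0 0 (diagonal d)) (Sum.elim (A *ᵥ γ) θ) w ≤
        quadLoss (fromBlocks A 0 0 (diagonal d)) (Sum.elim (A *ᵥ γ) θ) u) ↔
      w = Sum.elim γ (fun k => θ k / d k) :=
  (hA.fromBlocks_zero (.diagonal hd)).forall_quadLoss_le_iff
    (fromBlocks_diagonal_mulVec_sumElim_div A (fun k => (hd k).ne') γ θ) w

/-- **pooled ERM solution.** With block-diagonal second moments
`Σ_e = blockdiag(Σ_{e1}, diag(d_e))`, cross moments `ρ_e = (Σ_{e1} γ, θ_e)`, and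
environment losses `R̄_e(w) = wᵀ Σ_e w − 2 ρ_eᵀ w`, for every mixture weight
`π ∈ [0,1]` the pooled loss `π R̄₁ + (1−π) R̄₂` has the unique minimizer `(γ, v)`
where `v_k = (π θ_{1,k} + (1−π) θ_{2,k}) / (π d_{1,k} + (1−π) d_{2,k})`. -/
theorem pooled_erm_solution {p q : ℕ}
    (M₁ M₂ : Matrix (Fin p) (Fin p) ℝ) (hM₁ : M₁.PosDef) (hM₂ : M₂.PosDef)
    (d₁ d₂ : Fin q → ℝ) (hd₁ : ∀ k, 0 < d₁ k) (hd₂ : ∀ k, 0 < d₂ k)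
    (θ₁ θ₂ : Fin q → ℝ) (γ : Fin p → ℝ)
    (π : ℝ) (hπ : π ∈ Set.Icc (0 : ℝ) 1) :
    let S₁ : Matrix (Fin p ⊕ Fin q) (Fin p ⊕ Fin q) ℝ :=
      Matrix.fromBlocks M₁ 0 0 (Matrix.diagonal d₁)
    let S₂ : Matrix (Fin p ⊕ Fin q) (Fin p ⊕ Fin q) ℝ :=
      Matrix.fromBlocks M₂ 0 0 (Matrix.diagonal d₂)
    let ρ₁ : Fin p ⊕ Fin q → ℝ := Sum.elim (M₁ *ᵥ γ) θ₁
    let ρ₂ : Fin p ⊕ Fin q → ℝ := Sum.elim (M₂ *ᵥ γ) θ₂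
    let f : (Fin p ⊕ Fin q → ℝ) → ℝ := fun w =>
      π * (w ⬝ᵥ (S₁ *ᵥ w) - 2 * (ρ₁ ⬝ᵥ w)) + (1 - π) * (w ⬝ᵥ (S₂ *ᵥ w) - 2 * (ρ₂ ⬝ᵥ w))
    let wstar : Fin p ⊕ Fin q → ℝ :=
      Sum.elim γ (fun k => (π * θ₁ k + (1 - π) * θ₂ k) / (π * d₁ k + (1 - π) * d₂ k))
    (∀ u, f wstar ≤ f u) ∧ (∀ w, (∀ u, f w ≤ f u) → w = wstar) := by
  intro S₁ S₂ ρ₁ ρ₂ f wstar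
  obtain ⟨hπ₀, hπ₁⟩ := hπ
  have hd : ∀ k, 0 < π * d₁ k + (1 - π) * d₂ k := fun k =>
    convex_Ioi (0 : ℝ) (hd₁ k) (hd₂ k) hπ₀ (sub_nonneg.mpr hπ₁) (add_sub_cancel π 1)
  set d : Fin q → ℝ := fun k => π * d₁ k + (1 - π) * d₂ k
  set θ : Fin q → ℝ := fun k => π * θ₁ k + (1 - π) * θ₂ k
  have hf : f = quadLoss (fromBlocks (π • M₁ + (1 - π) • M₂) 0 0 (diagonal d))
      (Sum.elim ((π • M₁ + (1 - π) • M₂) *ᵥ γ) θ) := by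
    funext w
    refine (mul_quadLoss_add_mul_quadLoss π (1 - π) S₁ S₂ ρ₁ ρ₂ w).trans ?_
    congr 1
    · simp only [S₁, S₂, fromBlocks_smul, fromBlocks_add, smul_zero, add_zero, ← diagonal_smul,
        diagonal_add, Pi.smul_apply, smul_eq_mul, d]
    · ext (i | k) <;> simp [ρ₁, ρ₂, θ, add_mulVec, smul_mulVec]
  have hmin := forall_quadLoss_fromBlocks_diagonal_le_iff
    (hM₁.smul_add_one_sub_smul hM₂ hπ₀ hπ₁) hd γ θ
  rw [hf]
  exact ⟨(hmin wstar).mpr rfl, fun w => (hmin w).mp⟩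
end

section
/- Consider the scalar best response dynamic with bound W > 0 and targets w₁*, w₂* ∈ ℝ. If the targets have the same sign and are strictly ordered, 0 < w₁* < w₂* ≤ W, then there exists T such that for all t ≥ T, a_t = w₁* − W and b_t = W; in particular the ensemble a_t + b_t is eventually equal to w₁*. -/
/-- Clamp a real number to the interval `[−W, W]`. -/
noncomputable def clamp (W x : ℝ) : ℝ := max (-W) (min W x)

/-- The scalar best response dynamic with bound `W` and targets `w₁*, w₂*`:
`a₀ = b₀ = 0`; at odd steps environment 1 best-responds,
`a_t = clamp_W (w₁* − b_{t−1})`; at even steps environment 2 best-responds,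
`b_t = clamp_W (w₂* − a_{t−1})`. The state at time `t` is the pair `(a_t, b_t)`. -/
noncomputable def brd (W w₁ w₂ : ℝ) : ℕ → ℝ × ℝ
  | 0 => (0, 0)
  | t + 1 =>
    let s := brd W w₁ w₂ t
    if (t + 1) % 2 = 1 then (clamp W (w₁ - s.2), s.2)
    else (s.1, clamp W (w₂ - s.1))

lemma brd_succ (W w₁ w₂ : ℝ) (t : ℕ) :
    brd W w₁ w₂ (t+1) = if (t+1) % 2 = 1
      then (clamp W (w₁ - (brd W w₁ w₂ t).2), (brd W w₁ w₂ t).2)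
      else ((brd W w₁ w₂ t).1, clamp W (w₂ - (brd W w₁ w₂ t).1)) := rfl

lemma clamp_eq_self {W x : ℝ} (h1 : -W ≤ x) (h2 : x ≤ W) : clamp W x = x := by
  unfold clamp
  rw [min_eq_right h2, max_eq_right h1]

lemma clamp_eq_top {W x : ℝ} (hW : 0 ≤ W) (h : W ≤ x) : clamp W x = W := by
  unfold clamp
  rw [min_eq_left h, max_eq_right (by linarith)]

lemma brd_key (W w₁ w₂ : ℝ) (hW : 0 < W) (h₀ : 0 < w₁) (h₁₂ : w₁ < w₂) (h₂W : w₂ ≤ W) :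
    ∀ k : ℕ, brd W w₁ w₂ (2*k+2)
      = (w₁ - min W (k*(w₂-w₁)), min W ((k+1)*(w₂-w₁))) := by
  have hd : 0 < w₂ - w₁ := by linarith
  intro k
  induction k with
  | zero =>
    have h1 : brd W w₁ w₂ 1 = (w₁, 0) := by
      rw [show (1:ℕ) = 0+1 from rfl, brd_succ]
      simp only [brd]
      norm_num
      exact clamp_eq_self (by linarith) (by linarith)
    have h2 : brd W w₁ w₂ 2 = (w₁, min W (w₂ - w₁)) := by
      rw [show (2:ℕ) = 1+1 from rfl, brd_succ, h1]
      norm_num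
      rw [min_eq_right (by linarith)]
      exact clamp_eq_self (by linarith) (by linarith)
    simpa [min_eq_right hW.le] using h2
  | succ k ih =>
    have hmnn : 0 ≤ min W ((k+1)*(w₂-w₁)) :=
      le_min (le_of_lt hW) (by positivity)
    have hmW : min W ((k+1)*(w₂-w₁)) ≤ W := min_le_left _ _
    have h3 : brd W w₁ w₂ (2*(k+1)+1)
        = (w₁ - min W ((k+1)*(w₂-w₁)), min W ((k+1)*(w₂-w₁))) := by
      rw [show 2*(k+1)+1 = (2*k+2)+1 by ring, brd_succ, ih]
      have : ((2*k+2)+1) % 2 = 1 := by omega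
      rw [this]
      simp only [if_true]
      rw [clamp_eq_self (by linarith) (by linarith)]
    rw [show 2*(k+1)+2 = (2*(k+1)+1)+1 by ring, brd_succ, h3]
    have : ((2*(k+1)+1)+1) % 2 = 0 := by omega
    rw [this]
    norm_num
    have hsub : w₂ - (w₁ - min W (((k:ℝ)+1)*(w₂-w₁)))
        = (w₂ - w₁) + min W (((k:ℝ)+1)*(w₂-w₁)) := by ring
    rw [hsub]
    rcases le_or_gt W (((k:ℝ)+1)*(w₂-w₁)) with h | h
    · rw [min_eq_left h]
      rw [clamp_eq_top (le_of_lt hW) (by linarith)]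
      rw [min_eq_left (by nlinarith)]
    · rw [min_eq_right (le_of_lt h)]
      rcases le_or_gt W ((w₂-w₁) + ((k:ℝ)+1)*(w₂-w₁)) with h2 | h2
      · rw [clamp_eq_top (le_of_lt hW) h2]
        rw [min_eq_left (by nlinarith)]
      · rw [clamp_eq_self (by nlinarith) (le_of_lt h2)]
        rw [min_eq_right (by nlinarith)]
        ring

/-- If `0 < w₁* < w₂* ≤ W`, then the scalar best response dynamic
eventually stabilizes at `(a_t, b_t) = (w₁* − W, W)`; in particular the ensemble
`a_t + b_t` is eventually equal to `w₁*`. -/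
theorem brd_converges_same_sign (W w₁ w₂ : ℝ) (hW : 0 < W)
    (h₀ : 0 < w₁) (h₁₂ : w₁ < w₂) (h₂W : w₂ ≤ W) :
    ∃ T : ℕ, ∀ t ≥ T, brd W w₁ w₂ t = (w₁ - W, W) := by
  have hd : 0 < w₂ - w₁ := by linarith
  obtain ⟨N, hN⟩ := Archimedean.arch W hd
  have hN' : W ≤ (N:ℝ) * (w₂ - w₁) := by
    simpa [nsmul_eq_mul] using hN
  refine ⟨2*N+2, ?_⟩
  have hbase : brd W w₁ w₂ (2*N+2) = (w₁ - W, W) := by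
    rw [brd_key W w₁ w₂ hW h₀ h₁₂ h₂W N]
    rw [min_eq_left hN', min_eq_left (by nlinarith)]
  intro t ht
  obtain ⟨m, rfl⟩ : ∃ m, t = (2*N+2) + m := ⟨t - (2*N+2), by omega⟩
  clear ht
  induction m with
  | zero => simpa using hbase
  | succ m ih =>
    rw [show (2*N+2)+(m+1) = ((2*N+2)+m)+1 by ring, brd_succ, ih]
    rcases Nat.even_or_odd ((2*N+2)+m+1) with h | h
    · have : ((2*N+2)+m+1) % 2 = 0 := Nat.even_iff.mp h
      rw [this]
      norm_num
      rw [show w₂ - (w₁ - W) = (w₂ - w₁) + W by ring]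
      exact clamp_eq_top (le_of_lt hW) (by linarith)
    · have : ((2*N+2)+m+1) % 2 = 1 := Nat.odd_iff.mp h
      rw [this]
      norm_num
      exact clamp_eq_self (by linarith) (by linarith)
end

section
/- Consider the scalar best response dynamic with bound W > 0 and targets satisfying 0 < w₁* < w₂* ≤ W, and let Δ = w₂* − w₁* > 0. Then the dynamic stabilizes after at most on the order of 2W/Δ updates: for every t ≥ 2⌈W/Δ⌉ + 1, (a_t, b_t) = (w₁* − W, W). -/
lemma clamp_of_mem (W x : ℝ) (h1 : -W ≤ x) (h2 : x ≤ W) : clamp W x = x := by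
  unfold clamp; rw [min_eq_right h2, max_eq_right h1]

lemma brd_odd_step (W w₁ w₂ : ℝ) (k : ℕ) :
    brd W w₁ w₂ (2*k+1) = (clamp W (w₁ - (brd W w₁ w₂ (2*k)).2), (brd W w₁ w₂ (2*k)).2) := by
  have : (2*k+1) % 2 = 1 := by omega
  simp [brd, this]

lemma brd_even_step (W w₁ w₂ : ℝ) (k : ℕ) :
    brd W w₁ w₂ (2*k+2) = ((brd W w₁ w₂ (2*k+1)).1, clamp W (w₂ - (brd W w₁ w₂ (2*k+1)).1)) := by
  have : (2*k+1+1) % 2 = 0 := by omega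
  show brd W w₁ w₂ (2*k+1+1) = _
  simp [brd, this]

lemma brd_even_snd (W w₁ w₂ : ℝ) (hW : 0 < W) (h₀ : 0 < w₁) (h₁₂ : w₁ < w₂) (h₂W : w₂ ≤ W) :
    ∀ k, (brd W w₁ w₂ (2*k)).2 = min W (k * (w₂ - w₁)) := by
  intro k
  induction k with
  | zero => simpa [brd] using hW.le
  | succ k ih =>
    have h2 : 2*(k+1) = 2*k+2 := by ring
    rw [h2, brd_even_step, brd_odd_step]
    have hm0 : (0:ℝ) ≤ min W (k * (w₂ - w₁)) := by
      have hk : (0:ℝ) ≤ (k:ℝ) := Nat.cast_nonneg k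
      apply le_min hW.le
      nlinarith
    have hmW : min W (k * (w₂ - w₁)) ≤ W := min_le_left _ _
    have hc : clamp W (w₁ - (brd W w₁ w₂ (2*k)).2) = w₁ - min W (k * (w₂ - w₁)) := by
      rw [ih]
      apply clamp_of_mem <;> nlinarith
    simp only [hc]
    have : clamp W (w₂ - (w₁ - min W (k * (w₂ - w₁))))
        = min W (w₂ - (w₁ - min W (k * (w₂ - w₁)))) := by
      unfold clamp
      apply max_eq_right
      have : -W ≤ (0:ℝ) := by linarith
      refine le_trans this ?_
      apply le_min (by linarith)
      nlinarith
    rw [this]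
    push_cast
    rcases le_total W (k * (w₂ - w₁)) with h | h
    · rw [min_eq_left h]
      rw [min_eq_left (by nlinarith), min_eq_left (by nlinarith)]
    · rw [min_eq_right h]
      have : w₂ - (w₁ - k * (w₂ - w₁)) = (k+1) * (w₂ - w₁) := by ring
      rw [this]

lemma brd_fixed (W w₁ w₂ : ℝ) (hW : 0 < W) (h₀ : 0 < w₁) (h₁₂ : w₁ < w₂) (h₂W : w₂ ≤ W)
    (t : ℕ) (h : brd W w₁ w₂ t = (w₁ - W, W)) : brd W w₁ w₂ (t+1) = (w₁ - W, W) := by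
  have hc1 : clamp W (w₁ - W) = w₁ - W := clamp_of_mem _ _ (by linarith) (by linarith)
  have hc2 : clamp W (w₂ - (w₁ - W)) = W := by
    unfold clamp
    rw [min_eq_left (by linarith), max_eq_right (by linarith)]
  rcases Nat.even_or_odd (t+1) with he | ho
  · have : (t+1) % 2 = 0 := Nat.even_iff.mp he
    simp [brd, this, h, hc2]
  · have : (t+1) % 2 = 1 := Nat.odd_iff.mp ho
    simp [brd, this, h, hc1]

/-- **convergence rate of the best response dynamic.** If
`0 < w₁* < w₂* ≤ W` and `Δ = w₂* − w₁*`, then the scalar best response dynamic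
stabilizes after at most on the order of `2W/Δ` updates: for every
`t ≥ 2⌈W/Δ⌉ + 1`, `(a_t, b_t) = (w₁* − W, W)`. -/
theorem brd_convergence_rate (W w₁ w₂ : ℝ) (hW : 0 < W)
    (h₀ : 0 < w₁) (h₁₂ : w₁ < w₂) (h₂W : w₂ ≤ W) :
    ∀ t ≥ 2 * ⌈W / (w₂ - w₁)⌉₊ + 1, brd W w₁ w₂ t = (w₁ - W, W) := by
  set N := ⌈W / (w₂ - w₁)⌉₊ with hN
  have hΔ : (0:ℝ) < w₂ - w₁ := by linarith
  have hNΔ : W ≤ N * (w₂ - w₁) := by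
    have := Nat.le_ceil (W / (w₂ - w₁))
    rw [div_le_iff₀ hΔ] at this
    exact_mod_cast this
  have hsnd := brd_even_snd W w₁ w₂ hW h₀ h₁₂ h₂W N
  have hbase : brd W w₁ w₂ (2*N+1) = (w₁ - W, W) := by
    rw [brd_odd_step, hsnd, min_eq_left hNΔ,
      clamp_of_mem _ _ (by linarith) (by linarith)]
  intro t ht
  induction t, ht using Nat.le_induction with
  | base => exact hbase
  | succ t ht ih => exact brd_fixed W w₁ w₂ hW h₀ h₁₂ h₂W t ih
end

section
/- Consider the constrained scalar regression game with r environments, where r is odd, r = 2m − 1 with median index m. Suppose the least squares coefficients are sorted, w₁* ≤ w₂* ≤ … ≤ w_r*, and |w_e*| ≤ W for all e. Then the strategy profile a ∈ [−W, W]^r given by a_e = −W for e < m, a_m = w_m*, and a_e = W for e > m is a pure Nash equilibrium, and the resulting ensemble coefficient ∑_{e=1}^r a_e equals the median least squares coefficient w_m*. -/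
open Finset

/-- **multiple environments, odd count.** Consider the constrained
scalar regression game with `r = 2k+1` environments (an odd number, with median
environment indexed `k` in 0-based indexing), bound `W > 0`, sorted least squares
coefficients `w₀* ≤ w₁* ≤ … ≤ w_{r−1}*` all in `[−W, W]`, and risks
`r_e(a) = s² − 2 s w_e*` where `s = ∑_j a_j`. The profile that plays `−W` below the
median, the median coefficient `w_k*` at the median, and `W` above the median is a
pure Nash equilibrium, and its ensemble coefficient `∑_e a_e` equals `w_k*`. -/
theorem multi_env_scalar_nash (k : ℕ) (W : ℝ) (hW : 0 < W)
    (w : Fin (2 * k + 1) → ℝ) (hsorted : Monotone w) (hbd : ∀ e, |w e| ≤ W) :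
    let med : Fin (2 * k + 1) := ⟨k, by omega⟩
    let a : Fin (2 * k + 1) → ℝ :=
      fun e => if (e : ℕ) < k then -W else if (e : ℕ) = k then w med else W
    let riskOf : Fin (2 * k + 1) → (Fin (2 * k + 1) → ℝ) → ℝ :=
      fun e b => (∑ j, b j) ^ 2 - 2 * (∑ j, b j) * w e
    (∀ e : Fin (2 * k + 1), ∀ a' ∈ Set.Icc (-W) W,
        riskOf e a ≤ riskOf e (Function.update a e a')) ∧
    (∑ e, a e) = w med := by
  intro med a riskOf
  have hsum : (∑ e, a e) = w med := by
    have h1 : (∑ e, a e) = ∑ i ∈ Finset.range (2 * k + 1),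
        (if i < k then -W else if i = k then w med else W) :=
      Fin.sum_univ_eq_sum_range (fun i => if i < k then -W else if i = k then w med else W) _
    rw [h1]
    have h2 : Finset.range (2 * k + 1) = Finset.Ico 0 (2 * k + 1) := by
      rw [Finset.range_eq_Ico]
    rw [h2, ← Finset.sum_Ico_consecutive _ (Nat.zero_le k) (by omega : k ≤ 2 * k + 1),
      ← Finset.sum_Ico_consecutive _ (by omega : k ≤ k + 1) (by omega : k + 1 ≤ 2 * k + 1)]
    have hA : (∑ i ∈ Finset.Ico 0 k,
        (if i < k then -W else if i = k then w med else W)) = k * (-W) := by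
      rw [Finset.sum_congr rfl (fun i hi => by
        simp only [Finset.mem_Ico] at hi
        rw [if_pos hi.2])]
      simp [mul_comm]
    have hB : (∑ i ∈ Finset.Ico k (k + 1),
        (if i < k then -W else if i = k then w med else W)) = w med := by
      simp
    have hC : (∑ i ∈ Finset.Ico (k + 1) (2 * k + 1),
        (if i < k then -W else if i = k then w med else W)) = k * W := by
      rw [Finset.sum_congr rfl (fun i hi => by
        simp only [Finset.mem_Ico] at hi
        rw [if_neg (by omega), if_neg (by omega)])]
      rw [Finset.sum_const, Nat.card_Ico, nsmul_eq_mul,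
        (by omega : 2 * k + 1 - (k + 1) = k)]
    rw [hA, hB, hC]
    ring
  refine ⟨?_, hsum⟩
  intro e a' ha'
  obtain ⟨ha1, ha2⟩ := ha'
  have hupd : (∑ j, Function.update a e a' j) = (∑ j, a j) - a e + a' := by
    rw [Finset.sum_update_of_mem (Finset.mem_univ e), Finset.sdiff_singleton_eq_erase,
      ← Finset.add_sum_erase _ a (Finset.mem_univ e)]
    ring
  simp only [riskOf, hupd, hsum]
  set t : ℝ := w med - a e + a' with ht
  -- goal: (w med)^2 - 2*(w med)*(w e) ≤ t^2 - 2*t*(w e)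
  have hbmed := hbd med
  rw [abs_le] at hbmed
  rcases lt_trichotomy (e : ℕ) k with hlt | heq | hgt
  · have hae : a e = -W := by simp [a, hlt]
    have hwe : w e ≤ w med := hsorted (show e ≤ med from by simp [Fin.le_def, med]; omega)
    have htge : w med ≤ t := by rw [ht, hae]; linarith
    nlinarith [sq_nonneg (t - w med)]
  · have hemed : e = med := by
      apply Fin.ext; exact heq
    have hae : a e = w med := by simp [a, heq]
    rw [hemed]
    nlinarith [sq_nonneg (t - w med)]
  · have hae : a e = W := by simp only [a]; rw [if_neg (by omega), if_neg (by omega)]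
    have hwe : w med ≤ w e := hsorted (show med ≤ e from by simp [Fin.le_def, med]; omega)
    have htle : t ≤ w med := by rw [ht, hae]; linarith
    nlinarith [sq_nonneg (t - w med)]
end
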